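/- Consistency property: in the three-phase Cahn–Hilliard model, if c_2 = 0 (and c_1 + c_3 = 1), then f_2 = 0, where f_2 = (Σ_T/(3Σ_2)) [ (1/Σ_1)(∂F_0/∂c_2 − ∂F_0/∂c_1) + (1/Σ_3)(∂F_0/∂c_2 − ∂F_0/∂c_3) ] evaluated at (c, 0, 1−c); hence the chemical potential μ_2 = (12/ε)Σ_2 f_2 − (3/4)εΣ_2 Δc_2 vanishes whenever additionally Δc_2 = 0. -/

import Mathlib

/-!
On the edge `c₂ = 0` every partial derivative of `F₀` reduces to a single term:
`∂₁F₀ = 2σ₁₃ c₁ c₃²`, `∂₃F₀ = 2σ₁₃ c₁² c₃` and `∂₂F₀ = c₁ c₃ (Σ₁ c₁ + Σ₃ c₃)`.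
Since `Σ₁ + Σ₃ = 2σ₁₃`, this gives `∂₂F₀ - ∂₁F₀ = Σ₁ c₁ c₃ (c₁ - c₃)` and
`∂₂F₀ - ∂₃F₀ = Σ₃ c₁ c₃ (c₃ - c₁)`, so the weighted sum defining `f₂` cancels,
for every `c₁, c₃` and not only on the line `c₁ + c₃ = 1`.
-/

noncomputable def F0 (σ12 σ13 σ23 c1 c2 c3 : ℝ) : ℝ :=
  σ12 * c1 ^ 2 * c2 ^ 2 + σ13 * c1 ^ 2 * c3 ^ 2 + σ23 * c2 ^ 2 * c3 ^ 2 +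
    c1 * c2 * c3 * ((σ12 + σ13 - σ23) * c1 + (σ12 + σ23 - σ13) * c2 +
      (σ13 + σ23 - σ12) * c3)

theorem hasDerivAt_quadratic (a b k x : ℝ) :
    HasDerivAt (fun y => a * y ^ 2 + b * y + k) (2 * a * x + b) x := by
  have h := (((hasDerivAt_pow 2 x).const_mul a).add ((hasDerivAt_id' x).const_mul b)).add_const k
  exact h.congr_deriv (by push_cast; ring)

section Edge

variable (σ12 σ13 σ23 c1 c3 : ℝ)

theorem deriv_F0_fst_of_snd_eq_zero :
    deriv (fun x => F0 σ12 σ13 σ23 x 0 c3) c1 = 2 * σ13 * c1 * c3 ^ 2 := by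
  have hslice : (fun x => F0 σ12 σ13 σ23 x 0 c3) =
      fun y => σ13 * c3 ^ 2 * y ^ 2 + 0 * y + 0 := by
    funext x
    simp only [F0]
    ring
  rw [hslice, (hasDerivAt_quadratic _ _ _ _).deriv]
  ring

theorem deriv_F0_third_of_snd_eq_zero :
    deriv (fun x => F0 σ12 σ13 σ23 c1 0 x) c3 = 2 * σ13 * c1 ^ 2 * c3 := by
  have hslice : (fun x => F0 σ12 σ13 σ23 c1 0 x) =
      fun y => σ13 * c1 ^ 2 * y ^ 2 + 0 * y + 0 := by
    funext x
    simp only [F0]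
    ring
  rw [hslice, (hasDerivAt_quadratic _ _ _ _).deriv]
  ring

theorem deriv_F0_snd_at_zero :
    deriv (fun x => F0 σ12 σ13 σ23 c1 x c3) 0 =
      c1 * c3 * ((σ12 + σ13 - σ23) * c1 + (σ13 + σ23 - σ12) * c3) := by
  have hslice : (fun x => F0 σ12 σ13 σ23 c1 x c3) = fun y =>
      (σ12 * c1 ^ 2 + σ23 * c3 ^ 2 + c1 * c3 * (σ12 + σ23 - σ13)) * y ^ 2 +
        c1 * c3 * ((σ12 + σ13 - σ23) * c1 + (σ13 + σ23 - σ12) * c3) * y +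
        σ13 * c1 ^ 2 * c3 ^ 2 := by
    funext x
    simp only [F0]
    ring
  rw [hslice, (hasDerivAt_quadratic _ _ _ _).deriv]
  ring

theorem F0_weighted_partial_differences_eq_zero_of_snd_eq_zero
    (h1 : σ12 + σ13 - σ23 ≠ 0) (h3 : σ13 + σ23 - σ12 ≠ 0) :
    1 / (σ12 + σ13 - σ23) * (deriv (fun x => F0 σ12 σ13 σ23 c1 x c3) 0 -
        deriv (fun x => F0 σ12 σ13 σ23 x 0 c3) c1) +
      1 / (σ13 + σ23 - σ12) * (deriv (fun x => F0 σ12 σ13 σ23 c1 x c3) 0 -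
        deriv (fun x => F0 σ12 σ13 σ23 c1 0 x) c3) = 0 := by
  rw [deriv_F0_snd_at_zero, deriv_F0_fst_of_snd_eq_zero, deriv_F0_third_of_snd_eq_zero]
  have h21 : c1 * c3 * ((σ12 + σ13 - σ23) * c1 + (σ13 + σ23 - σ12) * c3) -
      2 * σ13 * c1 * c3 ^ 2 = (σ12 + σ13 - σ23) * (c1 * c3 * (c1 - c3)) := by ring
  have h23 : c1 * c3 * ((σ12 + σ13 - σ23) * c1 + (σ13 + σ23 - σ12) * c3) -
      2 * σ13 * c1 ^ 2 * c3 = (σ13 + σ23 - σ12) * (c1 * c3 * (c3 - c1)) := by ring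
  rw [h21, h23, one_div, one_div, inv_mul_cancel_left₀ h1, inv_mul_cancel_left₀ h3]
  ring

end Edge

theorem consistency_f2_vanishes_general
    (σ12 σ13 σ23 S1 S2 S3 ST ε : ℝ)
    (hS1 : S1 = σ12 + σ13 - σ23)
    (hS3 : S3 = σ13 + σ23 - σ12)
    (hS1ne : S1 ≠ 0) (hS3ne : S3 ≠ 0)
    (c : ℝ)
    (d1 d2 d3 : ℝ)
    (hd1 : d1 = deriv (fun x => F0 σ12 σ13 σ23 x 0 (1 - c)) c)
    (hd2 : d2 = deriv (fun x => F0 σ12 σ13 σ23 c x (1 - c)) 0)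
    (hd3 : d3 = deriv (fun x => F0 σ12 σ13 σ23 c 0 x) (1 - c))
    (f2 : ℝ)
    (hf2 : f2 = ST / (3 * S2) * (1 / S1 * (d2 - d1) + 1 / S3 * (d2 - d3))) :
    f2 = 0 ∧ ∀ Δc2 : ℝ, Δc2 = 0 →
      12 / ε * S2 * f2 - 3 / 4 * ε * S2 * Δc2 = 0 := by
  subst hS1 hS3 hd1 hd2 hd3
  have hf2_zero : f2 = 0 := by
    rw [hf2, F0_weighted_partial_differences_eq_zero_of_snd_eq_zero _ _ _ _ _ hS1ne hS3ne,
      mul_zero]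
  refine ⟨hf2_zero, fun Δc2 hΔc2 => ?_⟩
  rw [hf2_zero, hΔc2]
  ring

/-- Consistency: f₂ = 0 when c₂ = 0 (and c₁ + c₃ = 1); hence μ₂ = 0 whenever
additionally Δc₂ = 0. Partial derivatives of F₀ are taken as derivatives of the
one-variable slices, evaluated at (c, 0, 1 - c). -/
theorem consistency_f2_vanishes
    (σ12 σ13 σ23 S1 S2 S3 ST ε : ℝ)
    (hS1 : S1 = σ12 + σ13 - σ23)
    (hS2 : S2 = σ12 + σ23 - σ13)
    (hS3 : S3 = σ13 + σ23 - σ12)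
    (hS1ne : S1 ≠ 0) (hS2ne : S2 ≠ 0) (hS3ne : S3 ≠ 0)
    (hST : 3 / ST = 1 / S1 + 1 / S2 + 1 / S3)
    (hε : ε > 0) (c : ℝ)
    (d1 d2 d3 : ℝ)
    (hd1 : d1 = deriv (fun x => F0 σ12 σ13 σ23 x 0 (1 - c)) c)
    (hd2 : d2 = deriv (fun x => F0 σ12 σ13 σ23 c x (1 - c)) 0)
    (hd3 : d3 = deriv (fun x => F0 σ12 σ13 σ23 c 0 x) (1 - c))
    (f2 : ℝ)
    (hf2 : f2 = ST / (3 * S2) * (1 / S1 * (d2 - d1) + 1 / S3 * (d2 - d3))) :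
    f2 = 0 ∧ ∀ Δc2 : ℝ, Δc2 = 0 →
      12 / ε * S2 * f2 - 3 / 4 * ε * S2 * Δc2 = 0 :=
  consistency_f2_vanishes_general σ12 σ13 σ23 S1 S2 S3 ST ε hS1 hS3 hS1ne hS3ne c d1 d2 d3 hd1 hd2
    hd3 f2 hf2
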